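/- arXiv:2506.17168 — 2 statements merged into one kernel-verified Lean document; each statement's English description precedes it below -/
import Mathlib

section
/- Let d ∈ (0, 1/2) and let v₁, v₂ be real numbers with v₁ ≠ v₂. Then ∫_ℝ (v₁ - x)₊^{d-1} (v₂ - x)₊^{d-1} dx = |v₁ - v₂|^{2d-1} · B(d, 1-2d), where B is the Beta function. -/
/-!
After translating so that the smaller of `v₁, v₂` sits at `0`, the integral becomes
`∫₀^∞ x^(d-1) (x + c)^(d-1) dx` with `c = |v₁ - v₂|`. The substitution `x = c u / (1 - u)` maps
`(0, 1)` onto `(0, ∞)` and turns `∫₀^∞ x^(a-1) (x + c)^(-(a+b)) dx` into `c^(-b) B(a, b)`,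
the Beta integral of the second kind.
-/

open MeasureTheory

noncomputable def Beta (a b : ℝ) : ℝ :=
  ∫ x in Set.Ioo (0:ℝ) 1, x ^ (a - 1) * (1 - x) ^ (b - 1)

open Set

lemma image_mul_div_one_sub_Ioo {c : ℝ} (hc : 0 < c) :
    (fun u : ℝ => c * u / (1 - u)) '' Ioo 0 1 = Ioi 0 := by
  ext y
  simp only [mem_image, mem_Ioo, mem_Ioi]
  constructor
  · rintro ⟨u, ⟨hu0, hu1⟩, rfl⟩
    exact div_pos (by positivity) (by linarith)
  · intro hy
    have hyc : 0 < y + c := by linarith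
    refine ⟨y / (y + c), ⟨by positivity, (div_lt_one hyc).2 (by linarith)⟩, ?_⟩
    rw [one_sub_div hyc.ne', add_sub_cancel_left]
    field_simp

lemma injOn_mul_div_one_sub_Ioo {c : ℝ} (hc : 0 < c) :
    InjOn (fun u : ℝ => c * u / (1 - u)) (Ioo 0 1) := by
  rintro u ⟨-, hu1⟩ v ⟨-, hv1⟩ h
  rw [div_eq_div_iff (by linarith) (by linarith)] at h
  nlinarith

lemma hasDerivAt_mul_div_one_sub (c : ℝ) {u : ℝ} (hu : u ≠ 1) :
    HasDerivAt (fun u : ℝ => c * u / (1 - u)) (c / (1 - u) ^ 2) u := by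
  have h1 : (1 : ℝ) - u ≠ 0 := sub_ne_zero.2 hu.symm
  refine (((hasDerivAt_id' u).const_mul c).div
    ((hasDerivAt_const u 1).sub (hasDerivAt_id' u)) h1).congr_deriv ?_
  simp only [Pi.sub_apply]
  ring

/-- No integrability is needed: the change of variables formula equates Bochner integrals, so when
both sides diverge the identity holds as `0 = 0`. -/
lemma integral_Ioi_rpow_mul_add_rpow (a b : ℝ) {c : ℝ} (hc : 0 < c) :
    ∫ x in Ioi (0 : ℝ), x ^ (a - 1) * (x + c) ^ (-(a + b)) = c ^ (-b) * Beta a b := by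
  rw [← image_mul_div_one_sub_Ioo hc, integral_image_eq_integral_abs_deriv_smul measurableSet_Ioo
    (fun u hu => (hasDerivAt_mul_div_one_sub c hu.2.ne).hasDerivWithinAt)
    (injOn_mul_div_one_sub_Ioo hc), Beta, ← integral_const_mul]
  refine setIntegral_congr_fun measurableSet_Ioo fun u ⟨hu0, hu1⟩ => ?_
  have hv : 0 < 1 - u := by linarith
  have hx : c * u / (1 - u) + c = c / (1 - u) := by field_simp; ring
  have hc_pow : c ^ (-b) = c ^ (a - 1) * c ^ (-(a + b)) * c := by
    rw [← Real.rpow_add hc, ← Real.rpow_add_one hc.ne']; ring_nf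
  have hv_pow :
      (1 - u) ^ (b - 1) = ((1 - u) ^ (a - 1) * (1 - u) ^ (-(a + b)) * (1 - u) ^ 2)⁻¹ := by
    rw [← Real.rpow_natCast, ← Real.rpow_add hv, ← Real.rpow_add hv, ← Real.rpow_neg hv.le]
    norm_num; ring_nf
  rw [smul_eq_mul, hx, abs_of_pos (by positivity), Real.div_rpow (by positivity) hv.le,
    Real.div_rpow hc.le hv.le, Real.mul_rpow hc.le hu0.le, hc_pow, hv_pow]
  field_simp

lemma integral_max_sub_rpow_mul_max_sub_rpow {s : ℝ} (t : ℝ) (hs : s ≠ 0) {w₁ w₂ : ℝ}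
    (hw : w₁ ≤ w₂) :
    ∫ x : ℝ, (max (w₁ - x) 0) ^ s * (max (w₂ - x) 0) ^ t
      = ∫ x in Ioi (0 : ℝ), x ^ s * (x + (w₂ - w₁)) ^ t := by
  rw [← integral_sub_left_eq_self _ volume w₁]
  simp only [sub_sub_cancel, sub_sub_eq_add_sub]
  rw [← setIntegral_eq_integral_of_forall_compl_eq_zero (s := Ioi 0)]
  · refine setIntegral_congr_fun measurableSet_Ioi fun x (hx : 0 < x) => ?_
    rw [max_eq_left hx.le, max_eq_left (by linarith)]
    ring_nf
  · intro x (hx : ¬ 0 < x)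
    rw [max_eq_right (not_lt.1 hx), Real.zero_rpow hs, zero_mul]

theorem integral_prod_plus_rpow_general (d v₁ v₂ : ℝ) (hd : d < 1/2)
    (hv : v₁ ≠ v₂) :
    ∫ x : ℝ, (max (v₁ - x) 0) ^ (d - 1) * (max (v₂ - x) 0) ^ (d - 1)
      = |v₁ - v₂| ^ (2 * d - 1) * Beta d (1 - 2 * d) := by
  wlog h : v₁ < v₂ generalizing v₁ v₂
  · rw [abs_sub_comm, ← this v₂ v₁ hv.symm (hv.lt_or_gt.resolve_left h)]
    congr 1 with x
    exact mul_comm _ _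
  have hc : 0 < v₂ - v₁ := sub_pos.2 h
  have hBeta := integral_Ioi_rpow_mul_add_rpow d (1 - 2 * d) hc
  rw [show -(d + (1 - 2 * d)) = d - 1 by ring, neg_sub] at hBeta
  rw [integral_max_sub_rpow_mul_max_sub_rpow _ (by linarith) h.le, abs_sub_comm, abs_of_pos hc,
    hBeta]

theorem integral_prod_plus_rpow (d v₁ v₂ : ℝ) (hd0 : 0 < d) (hd : d < 1/2)
    (hv : v₁ ≠ v₂) :
    ∫ x : ℝ, (max (v₁ - x) 0) ^ (d - 1) * (max (v₂ - x) 0) ^ (d - 1)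
      = |v₁ - v₂| ^ (2 * d - 1) * Beta d (1 - 2 * d) :=
  integral_prod_plus_rpow_general d v₁ v₂ hd hv
end

section
/- Let (a_j)_{j≥0} be a nonincreasing sequence of nonnegative reals with M := ∑_{j=0}^∞ a_j^{4/3} < ∞, and let p, q be nonnegative integers. Then the triple series ∑_{h=0}^∞ ∑_{i=0}^∞ ∑_{j=0}^∞ a_{h+i} · a_i · a_{h+q+j} · a_{p+j} converges and is at most M³. -/
theorem triple_series_bound (a : ℕ → ℝ) (ha0 : ∀ j, 0 ≤ a j)
    (hmono : ∀ j, a (j + 1) ≤ a j)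
    (hsum : Summable (fun j => a j ^ ((4 : ℝ) / 3))) (p q : ℕ) :
    Summable (fun t : ℕ × ℕ × ℕ =>
        a (t.1 + t.2.1) * a t.2.1 * a (t.1 + q + t.2.2) * a (p + t.2.2)) ∧
    ∑' t : ℕ × ℕ × ℕ,
        a (t.1 + t.2.1) * a t.2.1 * a (t.1 + q + t.2.2) * a (p + t.2.2)
      ≤ (∑' j : ℕ, a j ^ ((4 : ℝ) / 3)) ^ 3 := by
  have hanti : Antitone a := antitone_nat_of_succ_le hmono
  set b : ℕ → ℝ := fun j => a j ^ ((4 : ℝ) / 3) with hb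
  have hb0 : ∀ j, 0 ≤ b j := fun j => Real.rpow_nonneg (ha0 j) _
  -- key pointwise bound
  have key : ∀ h i n : ℕ, h ≤ n → i ≤ n →
      a n ≤ a h ^ ((2:ℝ)/3) * a i ^ ((1:ℝ)/3) := by
    intro h i n h1 h2
    calc a n = a n ^ ((2:ℝ)/3 + (1:ℝ)/3) := by norm_num
    _ = a n ^ ((2:ℝ)/3) * a n ^ ((1:ℝ)/3) :=
        Real.rpow_add_of_nonneg (ha0 n) (by norm_num) (by norm_num)
    _ ≤ a h ^ ((2:ℝ)/3) * a i ^ ((1:ℝ)/3) := by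
        gcongr <;> first
          | exact Real.rpow_nonneg (ha0 _) _
          | exact ha0 n
          | exact hanti h1
          | exact hanti h2
  have hterm : ∀ t : ℕ × ℕ × ℕ,
      a (t.1 + t.2.1) * a t.2.1 * a (t.1 + q + t.2.2) * a (p + t.2.2)
        ≤ b t.1 * (b t.2.1 * b t.2.2) := by
    rintro ⟨h, i, j⟩
    dsimp only
    have h1 : a (h + i) ≤ a h ^ ((2:ℝ)/3) * a i ^ ((1:ℝ)/3) :=
      key h i _ (Nat.le_add_right _ _) (Nat.le_add_left _ _)
    have h2 : a (h + q + j) ≤ a h ^ ((2:ℝ)/3) * a j ^ ((1:ℝ)/3) :=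
      key h j _ (le_trans (Nat.le_add_right _ _) (Nat.le_add_right _ _))
        (Nat.le_add_left _ _)
    have h3 : a (p + j) ≤ a j := hanti (Nat.le_add_left _ _)
    have N1 : 0 ≤ a h ^ ((2:ℝ)/3) * a i ^ ((1:ℝ)/3) :=
      mul_nonneg (Real.rpow_nonneg (ha0 h) _) (Real.rpow_nonneg (ha0 i) _)
    have N1' : 0 ≤ a h ^ ((2:ℝ)/3) * a j ^ ((1:ℝ)/3) :=
      mul_nonneg (Real.rpow_nonneg (ha0 h) _) (Real.rpow_nonneg (ha0 j) _)
    have N2 : 0 ≤ (a h ^ ((2:ℝ)/3) * a i ^ ((1:ℝ)/3)) * a i := mul_nonneg N1 (ha0 i)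
    calc a (h + i) * a i * a (h + q + j) * a (p + j)
        ≤ (a h ^ ((2:ℝ)/3) * a i ^ ((1:ℝ)/3)) * a i *
            (a h ^ ((2:ℝ)/3) * a j ^ ((1:ℝ)/3)) * a j :=
          mul_le_mul
            (mul_le_mul (mul_le_mul_of_nonneg_right h1 (ha0 i)) h2 (ha0 _) N2)
            h3 (ha0 _) (mul_nonneg N2 N1')
      _ = (a h ^ ((2:ℝ)/3) * a h ^ ((2:ℝ)/3)) * ((a i ^ ((1:ℝ)/3) * a i ^ (1:ℝ)) *
            (a j ^ ((1:ℝ)/3) * a j ^ (1:ℝ))) := by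
          rw [Real.rpow_one, Real.rpow_one]; ring
      _ = b h * (b i * b j) := by
          rw [← Real.rpow_add_of_nonneg (ha0 h) (by norm_num) (by norm_num),
            ← Real.rpow_add_of_nonneg (ha0 i) (by norm_num) (by norm_num),
            ← Real.rpow_add_of_nonneg (ha0 j) (by norm_num) (by norm_num)]
          norm_num [hb]
  have hg2 : Summable (fun t : ℕ × ℕ => b t.1 * b t.2) :=
    hsum.mul_of_nonneg hsum hb0 hb0
  have hg : Summable (fun t : ℕ × ℕ × ℕ => b t.1 * (b t.2.1 * b t.2.2)) :=
    hsum.mul_of_nonneg hg2 hb0 (fun t => mul_nonneg (hb0 _) (hb0 _))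
  have hnn : ∀ t : ℕ × ℕ × ℕ,
      0 ≤ a (t.1 + t.2.1) * a t.2.1 * a (t.1 + q + t.2.2) * a (p + t.2.2) :=
    fun t => mul_nonneg (mul_nonneg (mul_nonneg (ha0 _) (ha0 _)) (ha0 _)) (ha0 _)
  have hS : Summable (fun t : ℕ × ℕ × ℕ =>
      a (t.1 + t.2.1) * a t.2.1 * a (t.1 + q + t.2.2) * a (p + t.2.2)) :=
    Summable.of_nonneg_of_le hnn hterm hg
  refine ⟨hS, ?_⟩
  have hnorm : Summable (fun j => ‖b j‖) := by
    simpa [Real.norm_of_nonneg (hb0 _)] using hsum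
  have hnorm2 : Summable (fun t : ℕ × ℕ => ‖b t.1 * b t.2‖) := by
    simpa [Real.norm_of_nonneg (mul_nonneg (hb0 _) (hb0 _))] using hg2
  have htg : ∑' t : ℕ × ℕ × ℕ, b t.1 * (b t.2.1 * b t.2.2)
      = (∑' j, b j) ^ 3 := by
    have e2 : ∑' t : ℕ × ℕ, b t.1 * b t.2 = (∑' j, b j) * (∑' j, b j) :=
      (tsum_mul_tsum_of_summable_norm hnorm hnorm).symm
    have e3 : ∑' t : ℕ × (ℕ × ℕ), b t.1 * (b t.2.1 * b t.2.2)
        = (∑' j, b j) * (∑' t : ℕ × ℕ, b t.1 * b t.2) :=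
      (tsum_mul_tsum_of_summable_norm hnorm hnorm2).symm
    rw [e3, e2]; ring
  calc ∑' t : ℕ × ℕ × ℕ,
        a (t.1 + t.2.1) * a t.2.1 * a (t.1 + q + t.2.2) * a (p + t.2.2)
      ≤ ∑' t : ℕ × ℕ × ℕ, b t.1 * (b t.2.1 * b t.2.2) :=
        Summable.tsum_le_tsum hterm hS hg
    _ = (∑' j, b j) ^ 3 := htg
end
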